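/- Let (U,≤) be the universal homogeneous countable past-finite causal set and z ∈ U. Then the proper future {u ∈ U : z < u}, with the induced order, is order-isomorphic to (U,≤). -/

import Mathlib

/-- A stem (downward closed subset) of a poset. -/
def IsStemIn {U : Type*} [PartialOrder U] (A : Set U) : Prop :=
  ∀ ⦃y x : U⦄, x ∈ A → y ≤ x → y ∈ A

/-- `U` realizes all one-point stem-extensions of finite stems of `U`:
whenever `A` is a finite stem of `U` and `B` is a finite poset containing (an
isomorphic copy of) `A` as a stem with `|B| = |A| + 1`, there is a
stem-embedding `g : B → U` fixing `A` pointwise. -/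
def RealizesOnePointExt (U : Type*) [PartialOrder U] : Prop :=
  ∀ (A : Set U), A.Finite → IsStemIn A →
    ∀ (B : Type) (_ : PartialOrder B) (f : A ↪o B),
      (∀ (b : B) (a : A), b ≤ f a → ∃ a' : A, f a' = b) →
      Nat.card B = A.ncard + 1 →
      ∃ g : B ↪o U, (∀ a : A, g (f a) = (a : U)) ∧
        ∀ (u : U) (b : B), u ≤ g b → ∃ b' : B, g b' = u

/-!
Realizing one-point stem-extensions amounts to an extension property: every stem `S` contained
in a finite stem `A` is the strict past of some point outside `A`. This property passes to the
proper future of `z`: adjoin the past of `z` to both `A` and `S`, so that the new point lies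
above `z`. Between two countable past-finite posets with the extension property, a
back-and-forth argument over finite order isomorphisms between stems produces an order
isomorphism; a point is added to the domain once its whole strict past is there, which
well-founded induction along the finite pasts arranges.
-/

open Set

theorem isStemIn_iff_isLowerSet {U : Type*} [PartialOrder U] {A : Set U} :
    IsStemIn A ↔ IsLowerSet A :=
  ⟨fun h _ _ hba ha => h ha hba, fun h _ _ hx hyx => h hyx hx⟩

theorem IsLowerSet.insert_of_Iio_subset {α : Type*} [PartialOrder α] {s : Set α} {a : α}
    (hs : IsLowerSet s) (ha : Iio a ⊆ s) : IsLowerSet (insert a s) := by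
  rintro b c hcb (rfl | hb)
  · exact (eq_or_lt_of_le hcb).imp id fun h => ha h
  · exact Or.inr (hs hcb hb)

theorem IsCofinal.biInter_of_isUpperSet {P ι : Type*} [Preorder P] {s : Set ι} (hs : s.Finite)
    {D : ι → Set P} (hup : ∀ i ∈ s, IsUpperSet (D i)) (hD : ∀ i ∈ s, IsCofinal (D i)) :
    IsCofinal (⋂ i ∈ s, D i) := by
  induction s, hs using Set.Finite.induction_on with
  | empty => simp [IsCofinal.univ]
  | @insert i s _ _ ih =>
    intro x
    obtain ⟨y, hy, hxy⟩ := ih (fun j hj => hup j (mem_insert_of_mem _ hj))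
      (fun j hj => hD j (mem_insert_of_mem _ hj)) x
    obtain ⟨z, hz, hyz⟩ := hD i (mem_insert _ _) y
    refine ⟨z, ?_, hxy.trans hyz⟩
    rw [biInter_insert]
    exact ⟨hz, mem_iInter₂.2 fun j hj => hup j (mem_insert_of_mem _ hj) hyz (mem_iInter₂.1 hy j hj)⟩

theorem nonempty_orderIso_of_rel {V W : Type*} [PartialOrder V] [PartialOrder W]
    {r : V → W → Prop} (hV : ∀ v, ∃ w, r v w) (hW : ∀ w, ∃ v, r v w)
    (hr : ∀ ⦃v w v' w'⦄, r v w → r v' w' → (v ≤ v' ↔ w ≤ w')) : Nonempty (V ≃o W) := by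
  choose f hf using hV
  let e : V ↪o W := OrderEmbedding.ofMapLEIff f fun a b => (hr (hf a) (hf b)).symm
  refine ⟨OrderIso.ofSurjective e fun w => ?_⟩
  obtain ⟨v, hv⟩ := hW w
  exact ⟨v, le_antisymm ((hr (hf v) hv).1 le_rfl) ((hr hv (hf v)).1 le_rfl)⟩

def PastFinite (α : Type*) [Preorder α] : Prop :=
  ∀ x : α, (Iic x).Finite

namespace PastFinite

variable {α : Type*} [PartialOrder α]

theorem wellFoundedLT (h : PastFinite α) : WellFoundedLT α :=
  ⟨(measure fun x => (Iic x).ncard).wf.mono fun _ x hlt =>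
    ncard_lt_ncard (Iic_ssubset_Iic.2 hlt) (h x)⟩

theorem subtype (h : PastFinite α) (p : α → Prop) : PastFinite {x // p x} := fun x =>
  ((h x).preimage Subtype.val_injective.injOn).subset fun _ hs => hs

theorem finite_lowerClosure (h : PastFinite α) {s : Set α} (hs : s.Finite) :
    (lowerClosure s : Set α).Finite := by
  rw [coe_lowerClosure]
  exact hs.biUnion fun a _ => h a

end PastFinite

def ExtensionProperty (V : Type*) [PartialOrder V] : Prop :=
  ∀ A S : Set V, A.Finite → IsLowerSet A → S ⊆ A → IsLowerSet S → ∃ u ∉ A, Iio u = S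

/-- `α` with one new point, `none`, whose strict past is the given lower set. -/
def OnePointExt {α : Type*} [LE α] (_ : LowerSet α) : Type _ :=
  Option α

namespace OnePointExt

variable {α : Type*} [PartialOrder α] (S : LowerSet α)

/-- The order of `OnePointExt S` is pulled back along this map: `a` goes to its past, the new
point to `S`, and the flag keeps the new point above no old one. -/
def code : OnePointExt S → Set α × Bool
  | some a => (Iic a, false)
  | none => ((S : Set α), true)

theorem code_injective : Function.Injective (code S) := by
  rintro (_ | a) (_ | b) h
  · rfl
  · simp [code] at h
  · simp [code] at h
  · rw [Iic_inj.1 (congrArg Prod.fst h)]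

instance : PartialOrder (OnePointExt S) :=
  PartialOrder.lift (code S) (code_injective S)

instance [Finite α] : Finite (OnePointExt S) :=
  inferInstanceAs (Finite (Option α))

theorem card_eq [Finite α] : Nat.card (OnePointExt S) = Nat.card α + 1 :=
  Finite.card_option

def of : α ↪o OnePointExt S where
  toFun := some
  inj' := Option.some_injective α
  map_rel_iff' {a b} := show (Iic a, false) ≤ (Iic b, false) ↔ a ≤ b by simp

def new : OnePointExt S :=
  none

variable {S}

theorem eq_new_or_exists_eq_of (x : OnePointExt S) : x = new S ∨ ∃ a, x = of S a := by
  rcases x with _ | a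
  exacts [Or.inl rfl, Or.inr ⟨a, rfl⟩]

theorem of_le_new {a : α} : of S a ≤ new S ↔ a ∈ S :=
  show (Iic a, false) ≤ ((S : Set α), true) ↔ a ∈ S by
    simpa using ⟨fun h => h self_mem_Iic, fun h => S.lower.Iic_subset h⟩

theorem not_new_le_of (a : α) : ¬ new S ≤ of S a :=
  show ¬ ((S : Set α), true) ≤ (Iic a, false) by simp

theorem of_lt_new {a : α} : of S a < new S ↔ a ∈ S := by
  rw [lt_iff_le_not_ge, of_le_new]
  exact and_iff_left (not_new_le_of a)

end OnePointExt

namespace RealizesOnePointExt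

variable {U : Type*} [PartialOrder U]

/-- The definition only quantifies over extensions `B : Type`; this removes the restriction. -/
theorem exists_stemEmbedding (hreal : RealizesOnePointExt U) {A : Set U} (hA : A.Finite)
    (hAstem : IsStemIn A) {B : Type*} [PartialOrder B] [Finite B] (f : A ↪o B)
    (hf : ∀ (b : B) (a : A), b ≤ f a → ∃ a' : A, f a' = b) (hcard : Nat.card B = A.ncard + 1) :
    ∃ g : B ↪o U, (∀ a : A, g (f a) = a) ∧ ∀ (u : U) (b : B), u ≤ g b → ∃ b', g b' = u := by
  let e : B ≃o Shrink.{0} B := orderIsoShrink.{0} B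
  have he : ∀ (b : Shrink.{0} B) (a : A), b ≤ e (f a) → ∃ a' : A, e (f a') = b := by
    intro b a hb
    obtain ⟨a', ha'⟩ := hf (e.symm b) a (e.symm_apply_le.2 hb)
    exact ⟨a', by rw [ha', e.apply_symm_apply]⟩
  obtain ⟨g, hgf, hg⟩ := hreal A hA hAstem (Shrink.{0} B) inferInstance
    (f.trans e.toOrderEmbedding) he (by rw [← Nat.card_congr e.toEquiv, hcard])
  refine ⟨e.toOrderEmbedding.trans g, hgf, fun u b hu => ?_⟩
  obtain ⟨b', rfl⟩ := hg u (e b) hu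
  exact ⟨e.symm b', by simp⟩

theorem extensionProperty (hreal : RealizesOnePointExt U) : ExtensionProperty U := by
  intro A S hA hAlow hSA hSlow
  let T : LowerSet A := ⟨Subtype.val ⁻¹' S, hSlow.preimage (Subtype.mono_coe _)⟩
  have hf : ∀ (b : OnePointExt T) (a : A), b ≤ OnePointExt.of T a →
      ∃ a', OnePointExt.of T a' = b := by
    intro b a hb
    rcases b.eq_new_or_exists_eq_of with rfl | ⟨a', rfl⟩
    · exact absurd hb (OnePointExt.not_new_le_of a)
    · exact ⟨a', rfl⟩
  have := hA.to_subtype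
  obtain ⟨g, hgf, hg⟩ := hreal.exists_stemEmbedding hA (isStemIn_iff_isLowerSet.2 hAlow)
    (OnePointExt.of T) hf (by rw [OnePointExt.card_eq, Nat.card_coe_set_eq])
  refine ⟨g (OnePointExt.new T), fun hu => ?_, ?_⟩
  · exact OnePointExt.not_new_le_of _ (g.injective (hgf ⟨_, hu⟩)).ge
  · ext v
    refine ⟨fun hv => ?_, fun hv => ?_⟩
    · obtain ⟨b, rfl⟩ := hg v _ (le_of_lt hv)
      rcases b.eq_new_or_exists_eq_of with rfl | ⟨a, rfl⟩
      · exact absurd hv (lt_irrefl _)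
      · rw [hgf]
        exact OnePointExt.of_lt_new.1 (g.lt_iff_lt.1 hv)
    · have h : g (OnePointExt.of T ⟨v, hSA hv⟩) < g (OnePointExt.new T) :=
        g.lt_iff_lt.2 (OnePointExt.of_lt_new.2 hv)
      rwa [hgf] at h

end RealizesOnePointExt

theorem ExtensionProperty.future {U : Type*} [PartialOrder U] (hpf : PastFinite U)
    (hU : ExtensionProperty U) (z : U) : ExtensionProperty {u : U // z < u} := by
  intro A S hA _ hSA hSlow
  have hA' : (lowerClosure (insert z (Subtype.val '' A)) : Set U).Finite :=
    hpf.finite_lowerClosure ((hA.image _).insert z)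
  obtain ⟨u, huA, hu⟩ := hU _ _ hA' (lowerClosure _).lower
    (lowerClosure_mono (insert_subset_insert (image_mono hSA))) (lowerClosure _).lower
  have hzu : z < u := by
    rw [← mem_Iio, hu]
    exact subset_lowerClosure (mem_insert z _)
  refine ⟨⟨u, hzu⟩, fun h => huA (subset_lowerClosure (mem_insert_of_mem _ ⟨_, h, rfl⟩)), ?_⟩
  ext v
  rw [mem_Iio, ← Subtype.coe_lt_coe, ← mem_Iio, hu, SetLike.mem_coe, mem_lowerClosure]
  constructor
  · rintro ⟨a, rfl | ⟨s, hs, rfl⟩, hva⟩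
    · exact absurd hva (not_le_of_gt v.2)
    · exact hSlow (Subtype.coe_le_coe.1 hva) hs
  · exact fun hv => ⟨v, mem_insert_of_mem _ ⟨v, hv, rfl⟩, le_rfl⟩

section BackAndForth

open scoped Classical

variable {V W : Type*} [PartialOrder V] [PartialOrder W]

structure IsStemPartialIso (p : Finset (V × W)) : Prop where
  le_iff_le : ∀ a ∈ p, ∀ b ∈ p, a.1 ≤ b.1 ↔ a.2 ≤ b.2
  isLowerSet_fst : IsLowerSet (Prod.fst '' (p : Set (V × W)))
  isLowerSet_snd : IsLowerSet (Prod.snd '' (p : Set (V × W)))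

namespace IsStemPartialIso

variable {p : Finset (V × W)}

theorem empty : IsStemPartialIso (∅ : Finset (V × W)) where
  le_iff_le := by simp
  isLowerSet_fst := by simpa using isLowerSet_empty
  isLowerSet_snd := by simpa using isLowerSet_empty

theorem swap (hp : IsStemPartialIso p) : IsStemPartialIso (p.image Prod.swap) where
  le_iff_le := by
    simp only [Finset.mem_image, forall_exists_index, and_imp, forall_apply_eq_imp_iff₂]
    exact fun a ha b hb => (hp.le_iff_le a ha b hb).symm
  isLowerSet_fst := by simpa [image_image] using hp.isLowerSet_snd
  isLowerSet_snd := by simpa [image_image] using hp.isLowerSet_fst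

theorem exists_insert (hW : ExtensionProperty W) (hp : IsStemPartialIso p) {x : V}
    (hx : x ∉ Prod.fst '' (p : Set (V × W))) (hIio : Iio x ⊆ Prod.fst '' (p : Set (V × W))) :
    ∃ w, IsStemPartialIso (insert (x, w) p) := by
  have hSlow : IsLowerSet (Prod.snd '' {c ∈ (p : Set (V × W)) | c.1 < x}) := by
    rintro b _ hb ⟨c, ⟨hc, hcx⟩, rfl⟩
    obtain ⟨d, hd, rfl⟩ := hp.isLowerSet_snd hb ⟨c, hc, rfl⟩
    exact ⟨d, ⟨hd, ((hp.le_iff_le d hd c hc).2 hb).trans_lt hcx⟩, rfl⟩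
  obtain ⟨w, hwA, hw⟩ := hW _ _ (p.finite_toSet.image _) hp.isLowerSet_snd
    (image_mono (sep_subset _ _)) hSlow
  have hnot_le : ∀ a ∈ p, ¬ x ≤ a.1 ∧ ¬ w ≤ a.2 := fun a ha =>
    ⟨fun h => hx (hp.isLowerSet_fst h ⟨a, ha, rfl⟩),
      fun h => hwA (hp.isLowerSet_snd h ⟨a, ha, rfl⟩)⟩
  have hle_iff : ∀ a ∈ p, a.1 ≤ x ↔ a.2 ≤ w := by
    intro a ha
    rw [le_iff_lt_or_eq, le_iff_lt_or_eq, ← mem_Iio (b := w), hw,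
      or_iff_left fun h => hx ⟨a, ha, h⟩, or_iff_left fun h => hwA ⟨a, ha, h⟩]
    constructor
    · exact fun h => ⟨a, ⟨ha, h⟩, rfl⟩
    · rintro ⟨c, ⟨hc, hcx⟩, hca⟩
      exact ((hp.le_iff_le a ha c hc).2 hca.ge).trans_lt hcx
  refine ⟨w, ⟨?_, ?_, ?_⟩⟩
  · intro a ha b hb
    rw [Finset.mem_insert] at ha hb
    rcases ha with rfl | ha <;> rcases hb with rfl | hb
    · simp
    · exact iff_of_false (hnot_le b hb).1 (hnot_le b hb).2
    · exact hle_iff a ha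
    · exact hp.le_iff_le a ha b hb
  · rw [Finset.coe_insert, image_insert_eq]
    exact hp.isLowerSet_fst.insert_of_Iio_subset hIio
  · rw [Finset.coe_insert, image_insert_eq]
    exact hp.isLowerSet_snd.insert_of_Iio_subset (hw ▸ image_mono (sep_subset _ _))

end IsStemPartialIso

variable (V W) in
abbrev StemPartialIso : Type _ :=
  {p : Finset (V × W) // IsStemPartialIso p}

noncomputable def StemPartialIso.swap (f : StemPartialIso V W) : StemPartialIso W V :=
  ⟨f.1.image Prod.swap, f.2.swap⟩

theorem isCofinal_setOf_mem_fst (hpf : PastFinite V) (hW : ExtensionProperty W) (x : V) :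
    IsCofinal {f : StemPartialIso V W | x ∈ Prod.fst '' (f.1 : Set (V × W))} := by
  have := hpf.wellFoundedLT
  induction x using WellFoundedLT.induction with
  | _ x ih =>
  intro f
  have hup (y : V) : IsUpperSet {f : StemPartialIso V W | y ∈ Prod.fst '' (f.1 : Set (V × W))} :=
    fun _ _ hfg hy => image_mono (Finset.coe_subset.2 hfg) hy
  obtain ⟨g, hg, hfg⟩ := IsCofinal.biInter_of_isUpperSet ((hpf x).subset Iio_subset_Iic_self)
    (fun y _ => hup y) ih f
  by_cases hx : x ∈ Prod.fst '' (g.1 : Set (V × W))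
  · exact ⟨g, hx, hfg⟩
  obtain ⟨w, hw⟩ := g.2.exists_insert hW hx fun y hy => mem_iInter₂.1 hg y hy
  exact ⟨⟨_, hw⟩, ⟨(x, w), Finset.mem_insert_self _ _, rfl⟩,
    hfg.trans (Finset.subset_insert _ _)⟩

theorem isCofinal_setOf_mem_snd (hpf : PastFinite W) (hV : ExtensionProperty V) (y : W) :
    IsCofinal {f : StemPartialIso V W | y ∈ Prod.snd '' (f.1 : Set (V × W))} := by
  intro f
  obtain ⟨g, hg, hfg⟩ := isCofinal_setOf_mem_fst hpf hV y f.swap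
  refine ⟨g.swap, by simpa [StemPartialIso.swap, image_image] using hg, fun c hc => ?_⟩
  exact Finset.mem_image.2 ⟨c.swap, hfg (Finset.mem_image_of_mem _ hc), c.swap_swap⟩

theorem nonempty_orderIso_of_extensionProperty [Countable V] [Countable W]
    (hpfV : PastFinite V) (hpfW : PastFinite W) (hV : ExtensionProperty V)
    (hW : ExtensionProperty W) : Nonempty (V ≃o W) := by
  cases nonempty_encodable V
  cases nonempty_encodable W
  let D : V ⊕ W → Order.Cofinal (StemPartialIso V W) :=
    Sum.elim (fun x => ⟨_, isCofinal_setOf_mem_fst hpfV hW x⟩)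
      (fun y => ⟨_, isCofinal_setOf_mem_snd hpfW hV y⟩)
  let I := Order.idealOfCofinals ⟨∅, .empty⟩ D
  refine nonempty_orderIso_of_rel (r := fun x y => ∃ f ∈ I, (x, y) ∈ f.1)
    (fun x => ?_) (fun y => ?_) ?_
  · obtain ⟨f, ⟨c, hc, rfl⟩, hfI⟩ := Order.cofinal_meets_idealOfCofinals _ D (.inl x)
    exact ⟨c.2, f, hfI, hc⟩
  · obtain ⟨f, ⟨c, hc, rfl⟩, hfI⟩ := Order.cofinal_meets_idealOfCofinals _ D (.inr y)
    exact ⟨c.1, f, hfI, hc⟩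
  · rintro x y x' y' ⟨f, hf, hxy⟩ ⟨g, hg, hxy'⟩
    obtain ⟨k, -, hfk, hgk⟩ := I.directed _ hf _ hg
    exact k.2.le_iff_le _ (hfk hxy) _ (hgk hxy')

end BackAndForth

/-- In the universal homogeneous countable past-finite causal set,
the proper future of any point is order-isomorphic to the whole causal set. -/
theorem stmt_17 {U : Type*} [PartialOrder U] [Countable U]
    (hpf : ∀ x : U, {s : U | s ≤ x}.Finite)
    (hreal : RealizesOnePointExt U) (z : U) :
    Nonempty ({u : U // z < u} ≃o U) := by
  have hpf : PastFinite U := hpf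
  have hU : ExtensionProperty U := hreal.extensionProperty
  exact nonempty_orderIso_of_extensionProperty (hpf.subtype _) hpf (hU.future hpf z) hU
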